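/- arXiv:1404.0337 — 5 statements merged into one kernel-verified Lean document; each statement's English description precedes it below -/
import Mathlib

section
/- For every integer k ≥ 1, every recoloring sequence (with any number of admissible colors) from the coloring α^k to the coloring β^k of the graph B_k contains at least one coloring that uses at least 2k − 1 different colors. -/
/-- A `k`-coloring of `G`: colors in `{1,…,k}`, adjacent vertices differently colored. -/
def IsKColoring {V : Type*} (G : SimpleGraph V) (k : ℕ) (γ : V → ℕ) : Prop :=
  (∀ v, γ v ∈ Finset.Icc 1 k) ∧ ∀ u v, G.Adj u v → γ u ≠ γ v

/-- A `k`-recoloring sequence `seq 0, …, seq ℓ` from `α` to `β`: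
all are `k`-colorings, and consecutive colorings differ on at most one vertex. -/
def IsRecolSeq {V : Type*} (G : SimpleGraph V) (k : ℕ) (seq : ℕ → V → ℕ)
    (ℓ : ℕ) (α β : V → ℕ) : Prop :=
  seq 0 = α ∧ seq ℓ = β ∧ (∀ i ≤ ℓ, IsKColoring G k (seq i)) ∧
  ∀ i < ℓ, ∀ u w, seq i u ≠ seq (i+1) u → seq i w ≠ seq (i+1) w → u = w

/-- The graph `B_k`: vertices `b^i_j` for `i,j ∈ {1,…,k}`, with `b^i_j ~ b^{i'}_{j'}`
iff `i ≠ i'` and `j ≠ j'` (the complement of `K_k □ K_k`). -/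
def Bgraph (k : ℕ) : SimpleGraph (Fin k × Fin k) where
  Adj p q := p.1 ≠ q.1 ∧ p.2 ≠ q.2
  symm := ⟨fun p q h => ⟨h.1.symm, h.2.symm⟩⟩
  loopless := ⟨fun p h => h.1 rfl⟩

/-- The coloring `α^k` of `B_k`: `α^k(b^i_j) = i`. -/
def alphak (k : ℕ) : Fin k × Fin k → ℕ := fun p => p.1.val + 1

/-- The coloring `β^k` of `B_k`: `β^k(b^i_j) = j`. -/
def betak (k : ℕ) : Fin k × Fin k → ℕ := fun p => p.2.val + 1

/-!
Call a column of a coloring of `B_k` *rainbow* if its `k` cells get distinct colors. If two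
cells `b^i_j, b^{i'}_j` of column `j` share a color, every other vertex outside column `j` is
adjacent to one of them, so that color occurs only in column `j`. Hence a coloring with a
rainbow column and `m` non-rainbow columns uses at least `k + m` colors: the `k` colors of the
rainbow column and one private color for each non-rainbow column. Recoloring one vertex
changes the rainbow status of one column only, so along the sequence the number of non-rainbow
columns climbs from `0` (for `α^k`) to `k` (for `β^k`, when `k ≥ 2`) in steps of at most one,
and some coloring has exactly `k - 1` of them, hence at least `2k - 1` colors.
-/

lemma Nat.exists_eq_of_le_of_step_le_succ (f : ℕ → ℕ) {m ℓ : ℕ} (h0 : f 0 ≤ m)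
    (hℓ : m ≤ f ℓ) (hstep : ∀ t < ℓ, f (t + 1) ≤ f t + 1) : ∃ t ≤ ℓ, f t = m := by
  induction ℓ with
  | zero => exact ⟨0, le_rfl, le_antisymm h0 hℓ⟩
  | succ n ih =>
    rcases le_or_gt m (f n) with h | h
    · obtain ⟨t, ht, hft⟩ := ih h fun t ht => hstep t (ht.trans n.lt_succ_self)
      exact ⟨t, ht.trans n.le_succ, hft⟩
    · exact ⟨n + 1, le_rfl, le_antisymm ((hstep n n.lt_succ_self).trans h) hℓ⟩

section Columns

variable {k : ℕ} {C : Type*} [DecidableEq C]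

def nonRainbowCols (γ : Fin k × Fin k → C) : Finset (Fin k) :=
  Finset.univ.filter fun j => ¬ Function.Injective fun i => γ (i, j)

lemma mem_nonRainbowCols {γ : Fin k × Fin k → C} {j : Fin k} :
    j ∈ nonRainbowCols γ ↔ ∃ i i', i ≠ i' ∧ γ (i, j) = γ (i', j) := by
  simp [nonRainbowCols, Function.Injective, and_comm]

lemma exists_color_confined_to_col {γ : Fin k × Fin k → C}
    (hγ : ∀ u w, (Bgraph k).Adj u w → γ u ≠ γ w) {j : Fin k} (hj : j ∈ nonRainbowCols γ) :
    ∃ i, ∀ u, γ u = γ (i, j) → u.2 = j := by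
  obtain ⟨i, i', hii', hcol⟩ := mem_nonRainbowCols.mp hj
  refine ⟨i, fun u hu => ?_⟩
  by_contra huj
  by_cases hui : u.1 = i
  · exact hγ u (i', j) ⟨hui ▸ hii', huj⟩ (hu.trans hcol)
  · exact hγ u (i, j) ⟨hui, huj⟩ hu

lemma nonRainbowCols_subset_insert {γ γ' : Fin k × Fin k → C} (v : Fin k × Fin k)
    (hv : ∀ u, γ u ≠ γ' u → u = v) : nonRainbowCols γ' ⊆ insert v.2 (nonRainbowCols γ) := by
  intro j hj
  rw [Finset.mem_insert, or_iff_not_imp_left]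
  intro hjv
  have hagree : ∀ i, γ (i, j) = γ' (i, j) := fun i =>
    not_not.mp fun hne => hjv (congrArg Prod.snd (hv _ hne))
  obtain ⟨i, i', hii', hcol⟩ := mem_nonRainbowCols.mp hj
  exact mem_nonRainbowCols.mpr ⟨i, i', hii', by rw [hagree, hagree, hcol]⟩

lemma card_nonRainbowCols_le_succ {γ γ' : Fin k × Fin k → C}
    (hstep : ∀ u w, γ u ≠ γ' u → γ w ≠ γ' w → u = w) :
    (nonRainbowCols γ').card ≤ (nonRainbowCols γ).card + 1 := by
  by_cases h : ∃ v, γ v ≠ γ' v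
  · obtain ⟨v, hv⟩ := h
    calc (nonRainbowCols γ').card ≤ (insert v.2 (nonRainbowCols γ)).card :=
          Finset.card_le_card (nonRainbowCols_subset_insert v fun u hu => hstep u v hu hv)
      _ ≤ (nonRainbowCols γ).card + 1 := Finset.card_insert_le _ _
  · push Not at h
    rw [funext h]
    omega

lemma add_card_nonRainbowCols_le_card_image {γ : Fin k × Fin k → C}
    (hγ : ∀ u w, (Bgraph k).Adj u w → γ u ≠ γ w) {j₀ : Fin k}
    (hj₀ : j₀ ∉ nonRainbowCols γ) :
    k + (nonRainbowCols γ).card ≤ (Finset.univ.image γ).card := by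
  choose! row hrow using fun j (hj : j ∈ nonRainbowCols γ) => exists_color_confined_to_col hγ hj
  have hrainbow : Function.Injective fun i => γ (i, j₀) := by
    simpa [nonRainbowCols] using hj₀
  let color : Fin k ⊕ Fin k → C := Sum.elim (fun i => γ (i, j₀)) fun j => γ (row j, j)
  calc k + (nonRainbowCols γ).card
      = ((Finset.univ : Finset (Fin k)).disjSum (nonRainbowCols γ)).card := by
        rw [Finset.card_disjSum, Finset.card_univ, Fintype.card_fin]
    _ ≤ (Finset.univ.image γ).card := by
      refine Finset.card_le_card_of_injOn color (fun x _ => ?_) ?_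
      · cases x <;> simp [color]
      · rintro (i | j) hx (i' | j') hy hxy <;>
          simp only [Finset.mem_coe, Finset.inr_mem_disjSum] at hx hy
        · exact congrArg Sum.inl (hrainbow hxy)
        · obtain rfl : j₀ = j' := hrow j' hy _ hxy
          exact absurd hy hj₀
        · obtain rfl : j₀ = j := hrow j hx _ hxy.symm
          exact absurd hx hj₀
        · exact congrArg Sum.inr (hrow j' hy _ hxy)

lemma nonRainbowCols_alphak : nonRainbowCols (alphak k) = ∅ := by
  ext j
  simp only [mem_nonRainbowCols, alphak, Finset.notMem_empty, iff_false]
  rintro ⟨i, i', hii', hcol⟩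
  exact hii' (Fin.ext (by omega))

lemma sub_one_le_card_nonRainbowCols_betak : k - 1 ≤ (nonRainbowCols (betak k)).card := by
  rcases Nat.lt_or_ge k 2 with hk | hk
  · omega
  · have : nonRainbowCols (betak k) = Finset.univ := by
      refine Finset.eq_univ_iff_forall.mpr fun j => mem_nonRainbowCols.mpr ?_
      exact ⟨⟨0, by omega⟩, ⟨1, by omega⟩, by simp [Fin.ext_iff], rfl⟩
    simp [this]

end Columns

/-- For every `k ≥ 1`, every recoloring sequence (with any number `K` of
admissible colors) from `α^k` to `β^k` on `B_k` contains a coloring that uses at least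
`2k - 1` different colors. -/
theorem stmt_0 (k : ℕ) (hk : 1 ≤ k) (K ℓ : ℕ) (seq : ℕ → Fin k × Fin k → ℕ)
    (hseq : IsRecolSeq (Bgraph k) K seq ℓ (alphak k) (betak k)) :
    ∃ i ≤ ℓ, 2 * k - 1 ≤ (Finset.univ.image (seq i)).card := by
  obtain ⟨h0, hℓ, hcol, hstep⟩ := hseq
  obtain ⟨t, ht, hcard⟩ := Nat.exists_eq_of_le_of_step_le_succ
    (fun t => (nonRainbowCols (seq t)).card) (m := k - 1)
    (by simp [h0, nonRainbowCols_alphak]) (hℓ ▸ sub_one_le_card_nonRainbowCols_betak)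
    fun t ht => card_nonRainbowCols_le_succ (hstep t ht)
  have hlt : (nonRainbowCols (seq t)).card < (Finset.univ : Finset (Fin k)).card := by
    rw [Finset.card_univ, Fintype.card_fin]
    omega
  obtain ⟨j₀, -, hj₀⟩ := Finset.exists_mem_notMem_of_card_lt_card hlt
  have hcolors := add_card_nonRainbowCols_le_card_image (hcol t ht).2 hj₀
  exact ⟨t, ht, by omega⟩
end

section
/- For every integer k ≥ 1, there exists a (2k−1)-recoloring sequence from α^k to β^k on the graph B_k of length at most 2k². -/
/-!
Recolor `B_k` in two rounds of `k²` single-vertex steps, through the coloring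
`γ(i, j) = k + j` (with `i j : Fin k`; colors `k, …, 2k - 1`). In the first round the new color
`k + j` of a vertex can only equal the old color `i' + 1 = k` of a neighbour in the last row, so
recoloring the last row first keeps every intermediate coloring proper. In the second round the
new color `j + 1` can only equal `k = γ(i', 0)` of a neighbour in the first column, so that column
goes first.
-/

def recolorAlong {V : Type*} {n : ℕ} (ord : V → Fin n) (α β : V → ℕ) (t : ℕ) : V → ℕ :=
  fun v => if (ord v : ℕ) < t then β v else α v

section recolorAlong

variable {V : Type*} {G : SimpleGraph V} {k n : ℕ} {ord : V → Fin n} {α β : V → ℕ}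

theorem recolorAlong_zero : recolorAlong ord α β 0 = α := by
  funext v; simp [recolorAlong]

theorem recolorAlong_of_le (t : ℕ) (ht : n ≤ t) : recolorAlong ord α β t = β := by
  funext v; simp [recolorAlong, (ord v).isLt.trans_le ht]

theorem ord_eq_of_recolorAlong_ne {t : ℕ} {v : V}
    (h : recolorAlong ord α β t v ≠ recolorAlong ord α β (t + 1) v) : (ord v : ℕ) = t := by
  by_contra hne
  unfold recolorAlong at h
  split_ifs at h <;> omega

theorem isKColoring_recolorAlong (hα : IsKColoring G k α) (hβ : IsKColoring G k β)
    (hfirst : ∀ u v, G.Adj u v → β u = α v → ord v < ord u) (t : ℕ) :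
    IsKColoring G k (recolorAlong ord α β t) := by
  refine ⟨fun v => ?_, fun u v huv => ?_⟩
  · unfold recolorAlong; split_ifs
    exacts [hβ.1 v, hα.1 v]
  · unfold recolorAlong
    split_ifs with hu hv hv
    · exact hβ.2 u v huv
    · exact fun h => absurd (hfirst u v huv h) (by simp only [Fin.lt_def]; omega)
    · exact fun h => absurd (hfirst v u huv.symm h.symm) (by simp only [Fin.lt_def]; omega)
    · exact hα.2 u v huv

theorem isRecolSeq_recolorAlong (hord : Function.Injective ord)
    (hα : IsKColoring G k α) (hβ : IsKColoring G k β)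
    (hfirst : ∀ u v, G.Adj u v → β u = α v → ord v < ord u) :
    IsRecolSeq G k (recolorAlong ord α β) n α β :=
  ⟨recolorAlong_zero, recolorAlong_of_le n le_rfl,
    fun t _ => isKColoring_recolorAlong hα hβ hfirst t,
    fun _ _ _ _ hu hw =>
      hord (Fin.ext ((ord_eq_of_recolorAlong_ne hu).trans (ord_eq_of_recolorAlong_ne hw).symm))⟩

end recolorAlong

def seqAppend {V : Type*} (s : ℕ → V → ℕ) (ℓ : ℕ) (s' : ℕ → V → ℕ) : ℕ → V → ℕ :=
  fun i => if i ≤ ℓ then s i else s' (i - ℓ)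

theorem IsRecolSeq.append {V : Type*} {G : SimpleGraph V} {k ℓ ℓ' : ℕ} {s s' : ℕ → V → ℕ}
    {α β γ : V → ℕ} (h : IsRecolSeq G k s ℓ α β) (h' : IsRecolSeq G k s' ℓ' β γ) :
    IsRecolSeq G k (seqAppend s ℓ s') (ℓ + ℓ') α γ := by
  obtain ⟨h0, hℓ, hcol, hstep⟩ := h
  obtain ⟨h0', hℓ', hcol', hstep'⟩ := h'
  have hhead : ∀ i ≤ ℓ, seqAppend s ℓ s' i = s i := fun i hi => if_pos hi
  have htail : ∀ i, ℓ ≤ i → seqAppend s ℓ s' i = s' (i - ℓ) := by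
    intro i hi
    unfold seqAppend
    split_ifs with hiℓ
    · obtain rfl : i = ℓ := le_antisymm hiℓ hi
      rw [hℓ, Nat.sub_self, h0']
    · rfl
  refine ⟨by rw [hhead 0 (Nat.zero_le ℓ), h0], ?_, fun i hi => ?_, fun i hi => ?_⟩
  · rw [htail _ (Nat.le_add_right ℓ ℓ'), Nat.add_sub_cancel_left, hℓ']
  · rcases le_total i ℓ with hiℓ | hiℓ
    · rw [hhead i hiℓ]; exact hcol i hiℓ
    · rw [htail i hiℓ]; exact hcol' _ (by omega)
  · rcases lt_or_ge i ℓ with hiℓ | hiℓ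
    · rw [hhead i hiℓ.le, hhead (i + 1) hiℓ]; exact hstep i hiℓ
    · rw [htail i hiℓ, htail (i + 1) (by omega), Nat.sub_add_comm hiℓ]
      exact hstep' _ (by omega)

theorem finProdFinEquiv_lt_of_fst_lt {m n : ℕ} {a a' : Fin m} (b b' : Fin n) (h : a < a') :
    finProdFinEquiv (a, b) < finProdFinEquiv (a', b') := by
  rw [Fin.lt_def] at h ⊢
  simp only [finProdFinEquiv_apply_val]
  nlinarith [b.isLt, b'.isLt]

def gammak (k : ℕ) : Fin k × Fin k → ℕ := fun p => p.2.val + k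

-- rank of `(i, j)` is `j + k * (k - 1 - i)`
def lastRowFirst (k : ℕ) : Fin k × Fin k ≃ Fin (k * k) :=
  (Equiv.prodCongr Fin.revPerm (Equiv.refl _)).trans finProdFinEquiv

-- rank of `(i, j)` is `i + k * j`
def columnwise (k : ℕ) : Fin k × Fin k ≃ Fin (k * k) :=
  (Equiv.prodComm _ _).trans finProdFinEquiv

section Bgraph

variable {k : ℕ}

theorem isKColoring_alphak : IsKColoring (Bgraph k) (2 * k - 1) (alphak k) :=
  ⟨fun p => by simp only [alphak, Finset.mem_Icc]; omega,
    fun _ _ h e => h.1 (Fin.ext (by simpa [alphak] using e))⟩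

theorem isKColoring_betak : IsKColoring (Bgraph k) (2 * k - 1) (betak k) :=
  ⟨fun p => by simp only [betak, Finset.mem_Icc]; omega,
    fun _ _ h e => h.2 (Fin.ext (by simpa [betak] using e))⟩

theorem isKColoring_gammak : IsKColoring (Bgraph k) (2 * k - 1) (gammak k) :=
  ⟨fun p => by simp only [gammak, Finset.mem_Icc]; omega,
    fun _ _ h e => h.2 (Fin.ext (by simpa [gammak] using e))⟩

theorem lastRowFirst_lt_of_gammak_eq_alphak {u v : Fin k × Fin k} (huv : (Bgraph k).Adj u v)
    (h : gammak k u = alphak k v) : lastRowFirst k v < lastRowFirst k u := by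
  have hv : v.1.rev < u.1.rev := by
    have := huv.1; rw [Fin.lt_def, Fin.val_rev, Fin.val_rev]
    simp only [gammak, alphak, ne_eq, Fin.ext_iff] at h this; omega
  exact finProdFinEquiv_lt_of_fst_lt _ _ hv

theorem columnwise_lt_of_betak_eq_gammak {u v : Fin k × Fin k} (huv : (Bgraph k).Adj u v)
    (h : betak k u = gammak k v) : columnwise k v < columnwise k u := by
  have hv : v.2 < u.2 := by
    have := huv.2
    rw [Fin.lt_def]; simp only [betak, gammak, ne_eq, Fin.ext_iff] at h this; omega
  exact finProdFinEquiv_lt_of_fst_lt _ _ hv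

end Bgraph

theorem stmt_1_general (k : ℕ) :
    ∃ ℓ ≤ 2 * k ^ 2, ∃ seq : ℕ → Fin k × Fin k → ℕ,
      IsRecolSeq (Bgraph k) (2 * k - 1) seq ℓ (alphak k) (betak k) :=
  ⟨k * k + k * k, by rw [sq, two_mul], _,
    (isRecolSeq_recolorAlong (lastRowFirst k).injective isKColoring_alphak isKColoring_gammak
      fun _ _ => lastRowFirst_lt_of_gammak_eq_alphak).append
    (isRecolSeq_recolorAlong (columnwise k).injective isKColoring_gammak isKColoring_betak
      fun _ _ => columnwise_lt_of_betak_eq_gammak)⟩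

/-- For every `k ≥ 1`, there exists a `(2k-1)`-recoloring sequence from
`α^k` to `β^k` on `B_k` of length at most `2k²`. -/
theorem stmt_1 (k : ℕ) (hk : 1 ≤ k) :
    ∃ ℓ ≤ 2 * k ^ 2, ∃ seq : ℕ → Fin k × Fin k → ℕ,
      IsRecolSeq (Bgraph k) (2 * k - 1) seq ℓ (alphak k) (betak k) :=
  stmt_1_general k
end

section
/- Let k ≥ 1 and let γ be a proper coloring of the graph B_k (with any set of colors). Suppose that for some index i, γ assigns k pairwise distinct colors to the vertices of row R_i, and that for every index i' ≠ i, some color is assigned by γ to at least two distinct vertices of row R_{i'}. Then γ uses at least 2k − 1 different colors in total. -/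
/-!
For each row `r ≠ i` pick a color `c r` that is repeated in row `r`, at columns `a ≠ b`.
Every vertex outside row `r` lies off column `a` or off column `b`, so it is adjacent to
`b^r_a` or to `b^r_b`; hence `c r` occurs in no other row. The `k - 1` colors `c r` are
therefore pairwise distinct and differ from the `k` distinct colors of row `i`.
-/

namespace Bgraph

theorem color_ne_of_repeated_in_row {k : ℕ} {γ : Fin k × Fin k → ℕ}
    (hγ : ∀ p q, (Bgraph k).Adj p q → γ p ≠ γ q) {r a b : Fin k} (hab : a ≠ b)
    (hcol : γ (r, a) = γ (r, b)) {q : Fin k × Fin k} (hq : q.1 ≠ r) : γ q ≠ γ (r, a) := by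
  by_cases hqa : q.2 = a
  · rw [hcol]
    exact hγ q (r, b) ⟨hq, hqa ▸ hab⟩
  · exact hγ q (r, a) ⟨hq, hqa⟩

end Bgraph

theorem stmt_4_general (k : ℕ) (γ : Fin k × Fin k → ℕ)
    (hγ : ∀ p q, (Bgraph k).Adj p q → γ p ≠ γ q)
    (i : Fin k) (hrainbow : Function.Injective (fun j => γ (i, j)))
    (hrep : ∀ i' : Fin k, i' ≠ i → ∃ j j' : Fin k, j ≠ j' ∧ γ (i', j) = γ (i', j')) :
    2 * k - 1 ≤ (Finset.univ.image γ).card := by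
  choose a b hab hcol using hrep
  let v : Fin k ⊕ {r // r ≠ i} → Fin k × Fin k :=
    Sum.elim (fun m => (i, m)) (fun r => (r.1, a r.1 r.2))
  have hrow : ∀ (r : {r // r ≠ i}) q, q.1 ≠ r.1 → γ q ≠ γ (v (.inr r)) := fun r _ hq =>
    Bgraph.color_ne_of_repeated_in_row hγ (hab r.1 r.2) (hcol r.1 r.2) hq
  have hinj : Function.Injective (γ ∘ v) := by
    rw [Sum.comp_elim]
    refine hrainbow.sumElim (fun r s hrs => ?_) (fun m r => hrow r (i, m) r.2.symm)
    by_contra hne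
    exact hrow s _ (fun h => hne (Subtype.ext h)) hrs
  calc 2 * k - 1 = Fintype.card (Fin k ⊕ {r // r ≠ i}) := by
        simp only [Fintype.card_sum, Fintype.card_fin, Fintype.card_subtype_compl,
          Fintype.card_unique]
        omega
    _ ≤ (Finset.univ.image γ).card :=
        Finset.card_le_card_of_injOn (γ ∘ v) (fun x _ => Finset.mem_image_of_mem γ
          (Finset.mem_univ (v x))) hinj.injOn

/-- Let `k ≥ 1` and `γ` a proper coloring of `B_k` (with any colors).
If row `R_i` receives `k` pairwise distinct colors, and every other row `R_{i'}` has some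
color repeated on two distinct vertices, then `γ` uses at least `2k - 1` colors in total. -/
theorem stmt_4 (k : ℕ) (hk : 1 ≤ k) (γ : Fin k × Fin k → ℕ)
    (hγ : ∀ p q, (Bgraph k).Adj p q → γ p ≠ γ q)
    (i : Fin k) (hrainbow : Function.Injective (fun j => γ (i, j)))
    (hrep : ∀ i' : Fin k, i' ≠ i → ∃ j j' : Fin k, j ≠ j' ∧ γ (i', j) = γ (i', j')) :
    2 * k - 1 ≤ (Finset.univ.image γ).card :=
  stmt_4_general k γ hγ i hrainbow hrep
end

section
/- Let k ≥ 4, let G be a graph with a color list assignment L satisfying L(v) ⊆ {1,…,4} for all v, and let α, β be L-colorings of G. Construct G' from G by adding k new pairwise adjacent vertices x_1, …, x_k and, for every v ∈ V(G) and every i ∈ {1,…,k} \ L(v), the edge v x_i. Extend any L-coloring γ of G to a k-coloring γ' of G' by setting γ'(x_i) = i. Then for every integer ℓ ≥ 0: there exists an L-recoloring sequence for G from α to β of length at most ℓ if and only if there exists a k-recoloring sequence for G' from α' to β' of length at most ℓ. In particular, the distance between α and β in the reconfiguration graph of L-colorings of G equals the distance between α' and β' in the reconfiguration graph of k-colorings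 of G' (possibly both infinite). -/
/-- An `L`-coloring of `G`: every vertex gets a color from its list, and adjacent
vertices get different colors. -/
def IsLColoring {V : Type*} (G : SimpleGraph V) (L : V → Finset ℕ) (γ : V → ℕ) : Prop :=
  (∀ v, γ v ∈ L v) ∧ ∀ u v, G.Adj u v → γ u ≠ γ v

/-- An `L`-recoloring sequence `seq 0, …, seq ℓ` from `α` to `β`: all are `L`-colorings,
and consecutive colorings differ on at most one vertex. -/
def IsLRecolSeq {V : Type*} (G : SimpleGraph V) (L : V → Finset ℕ) (seq : ℕ → V → ℕ)
    (ℓ : ℕ) (α β : V → ℕ) : Prop :=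
  seq 0 = α ∧ seq ℓ = β ∧ (∀ i ≤ ℓ, IsLColoring G L (seq i)) ∧
  ∀ i < ℓ, ∀ u w, seq i u ≠ seq (i+1) u → seq i w ≠ seq (i+1) w → u = w

/-- The graph `G'` obtained from `G` by adding `k` pairwise adjacent new vertices
`x_1,…,x_k`, with an edge `v x_i` for every `v ∈ V(G)` and `i ∈ {1,…,k} \ L(v)`. -/
def ListToK {V : Type*} (G : SimpleGraph V) (L : V → Finset ℕ) (k : ℕ) :
    SimpleGraph (V ⊕ Fin k) where
  Adj w w' :=
    match w, w' with
    | .inl u, .inl v => G.Adj u v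
    | .inl v, .inr i => (i.val + 1) ∉ L v
    | .inr i, .inl v => (i.val + 1) ∉ L v
    | .inr i, .inr j => i ≠ j
  symm := by
    constructor
    rintro (u | i) (v | j) h
    · exact G.adj_symm h
    · exact h
    · exact h
    · exact fun e => h e.symm
  loopless := by
    constructor
    rintro (u | i) h
    · exact G.irrefl h
    · exact h rfl

/-- Extending a coloring `γ` of `G` to `G'` by `γ'(x_i) = i`. -/
def extColoring {V : Type*} (k : ℕ) (γ : V → ℕ) : V ⊕ Fin k → ℕ
  | .inl v => γ v
  | .inr i => i.val + 1

/-!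
The new vertices `x_1, …, x_k` form a `k`-clique, so in every `k`-coloring of `G'` they carry all
`k` colors. Recoloring one of them would therefore clash with the clique vertex that already has
the new color; hence along any `k`-recoloring sequence starting at `α'` each `x_i` keeps color `i`,
and the edges `v x_i` for `i ∉ L(v)` force every vertex `v` of `G` to stay within its list.
Conversely, extending an `L`-recoloring sequence by `γ'(x_i) = i` gives a `k`-recoloring sequence
of the same length, since `L(v) ⊆ {1, …, 4} ⊆ {1, …, k}`.
-/

def DiffersAtMostOne {W : Type*} (γ γ' : W → ℕ) : Prop :=
  ∀ u w, γ u ≠ γ' u → γ w ≠ γ' w → u = w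

theorem DiffersAtMostOne.comp {W W' : Type*} {γ γ' : W → ℕ} (h : DiffersAtMostOne γ γ')
    {f : W' → W} (hf : Function.Injective f) : DiffersAtMostOne (γ ∘ f) (γ' ∘ f) :=
  fun u w hu hw => hf (h (f u) (f w) hu hw)

section ListToK

variable {V : Type*} {G : SimpleGraph V} {L : V → Finset ℕ} {k : ℕ}

theorem DiffersAtMostOne.extColoring {γ γ' : V → ℕ} (h : DiffersAtMostOne γ γ') :
    DiffersAtMostOne (extColoring k γ) (extColoring k γ')
  | .inl u, .inl w, hu, hw => congrArg Sum.inl (h u w hu hw)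
  | .inl _, .inr _, _, hw => absurd rfl hw
  | .inr _, _, hu, _ => absurd rfl hu

theorem IsLColoring.isKColoring_extColoring (hL : ∀ v, L v ⊆ Finset.Icc 1 k) {γ : V → ℕ}
    (hγ : IsLColoring G L γ) : IsKColoring (ListToK G L k) k (extColoring k γ) := by
  obtain ⟨hmem, hadj⟩ := hγ
  refine ⟨?_, ?_⟩
  · rintro (v | j)
    · exact hL v (hmem v)
    · simp only [_root_.extColoring, Finset.mem_Icc]
      omega
  · rintro (u | i) (v | j) huv hcol
    · exact hadj u v huv hcol
    · exact huv ((show γ u = j.val + 1 from hcol) ▸ hmem u)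
    · exact huv ((show γ v = i.val + 1 from hcol.symm) ▸ hmem v)
    · exact huv (Fin.ext (Nat.succ_injective hcol))

theorem exists_fin_succ_eq_of_mem_Icc {c : ℕ} (hc : c ∈ Finset.Icc 1 k) :
    ∃ m : Fin k, m.val + 1 = c := by
  rw [Finset.mem_Icc] at hc
  exact ⟨⟨c - 1, by omega⟩, by simp only; omega⟩

theorem IsKColoring.isLColoring_comp_inl {γ : V ⊕ Fin k → ℕ}
    (hγ : IsKColoring (ListToK G L k) k γ) (hx : ∀ j : Fin k, γ (.inr j) = j.val + 1) :
    IsLColoring G L (γ ∘ Sum.inl) := by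
  obtain ⟨hmem, hadj⟩ := hγ
  refine ⟨fun v => ?_, fun u v huv => hadj (.inl u) (.inl v) huv⟩
  obtain ⟨m, hm⟩ := exists_fin_succ_eq_of_mem_Icc (hmem (.inl v))
  by_contra hv
  exact hadj (.inl v) (.inr m) (by show m.val + 1 ∉ L v; rwa [hm]) (by rw [hx, hm])

theorem IsKColoring.inr_eq_of_differsAtMostOne {γ γ' : V ⊕ Fin k → ℕ}
    (hγ' : IsKColoring (ListToK G L k) k γ') (hx : ∀ j : Fin k, γ (.inr j) = j.val + 1)
    (hd : DiffersAtMostOne γ γ') (j : Fin k) : γ' (.inr j) = j.val + 1 := by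
  by_contra hj
  obtain ⟨m, hm⟩ := exists_fin_succ_eq_of_mem_Icc (hγ'.1 (.inr j))
  have hmj : m ≠ j := by rintro rfl; exact hj hm.symm
  have hm_fixed : γ (.inr m) = γ' (.inr m) := by
    by_contra hne
    exact hmj (Sum.inr_injective (hd _ _ hne (by rw [hx]; exact Ne.symm hj)))
  exact hγ'.2 (.inr m) (.inr j) hmj (by rw [← hm_fixed, hx, hm])

theorem IsRecolSeq.inr_eq {seq : ℕ → V ⊕ Fin k → ℕ} {ℓ : ℕ} {α : V → ℕ} {β' : V ⊕ Fin k → ℕ}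
    (h : IsRecolSeq (ListToK G L k) k seq ℓ (extColoring k α) β') :
    ∀ i ≤ ℓ, ∀ j : Fin k, seq i (.inr j) = j.val + 1 := by
  obtain ⟨h0, -, hcol, hstep⟩ := h
  intro i
  induction i with
  | zero => intro _ j; rw [h0]; rfl
  | succ n ih =>
    intro hn
    exact (hcol (n + 1) hn).inr_eq_of_differsAtMostOne (ih (by omega)) (hstep n hn)

theorem IsLRecolSeq.isRecolSeq_extColoring (hL : ∀ v, L v ⊆ Finset.Icc 1 k)
    {seq : ℕ → V → ℕ} {ℓ : ℕ} {α β : V → ℕ} (h : IsLRecolSeq G L seq ℓ α β) :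
    IsRecolSeq (ListToK G L k) k (fun i => extColoring k (seq i)) ℓ
      (extColoring k α) (extColoring k β) := by
  obtain ⟨h0, hℓ, hcol, hstep⟩ := h
  exact ⟨by simp only [h0], by simp only [hℓ],
    fun i hi => (hcol i hi).isKColoring_extColoring hL,
    fun i hi => DiffersAtMostOne.extColoring (hstep i hi)⟩

theorem IsRecolSeq.isLRecolSeq_comp_inl {seq : ℕ → V ⊕ Fin k → ℕ} {ℓ : ℕ} {α β : V → ℕ}
    (h : IsRecolSeq (ListToK G L k) k seq ℓ (extColoring k α) (extColoring k β)) :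
    IsLRecolSeq G L (fun i => seq i ∘ Sum.inl) ℓ α β := by
  have hx := h.inr_eq
  obtain ⟨h0, hℓ, hcol, hstep⟩ := h
  exact ⟨show seq 0 ∘ Sum.inl = α by rw [h0]; rfl, show seq ℓ ∘ Sum.inl = β by rw [hℓ]; rfl,
    fun i hi => (hcol i hi).isLColoring_comp_inl (hx i hi),
    fun i hi => DiffersAtMostOne.comp (hstep i hi) Sum.inl_injective⟩

end ListToK

theorem stmt_9_general {V : Type*} (G : SimpleGraph V) (k : ℕ) (hk : 4 ≤ k)
    (L : V → Finset ℕ) (hL : ∀ v, L v ⊆ Finset.Icc 1 4)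
    (α β : V → ℕ) (ℓ : ℕ) :
    (∃ ℓ' ≤ ℓ, ∃ seq : ℕ → V → ℕ, IsLRecolSeq G L seq ℓ' α β) ↔
    (∃ ℓ' ≤ ℓ, ∃ seq : ℕ → V ⊕ Fin k → ℕ,
      IsRecolSeq (ListToK G L k) k seq ℓ' (extColoring k α) (extColoring k β)) := by
  have hLk : ∀ v, L v ⊆ Finset.Icc 1 k :=
    fun v => (hL v).trans (Finset.Icc_subset_Icc_right hk)
  constructor
  · rintro ⟨ℓ', hℓ', seq, hseq⟩
    exact ⟨ℓ', hℓ', _, hseq.isRecolSeq_extColoring hLk⟩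
  · rintro ⟨ℓ', hℓ', seq, hseq⟩
    exact ⟨ℓ', hℓ', _, hseq.isLRecolSeq_comp_inl⟩

/-- For `k ≥ 4`, lists `L(v) ⊆ {1,…,4}` and `L`-colorings `α`, `β` of `G`:
for every `ℓ ≥ 0`, there is an `L`-recoloring sequence for `G` from `α` to `β` of length
at most `ℓ` iff there is a `k`-recoloring sequence for `G'` from `α'` to `β'` of length
at most `ℓ`. (In particular the two reconfiguration distances coincide, possibly both
infinite.) -/
theorem stmt_9 {V : Type*} (G : SimpleGraph V) (k : ℕ) (hk : 4 ≤ k)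
    (L : V → Finset ℕ) (hL : ∀ v, L v ⊆ Finset.Icc 1 4)
    (α β : V → ℕ) (hα : IsLColoring G L α) (hβ : IsLColoring G L β) (ℓ : ℕ) :
    (∃ ℓ' ≤ ℓ, ∃ seq : ℕ → V → ℕ, IsLRecolSeq G L seq ℓ' α β) ↔
    (∃ ℓ' ≤ ℓ, ∃ seq : ℕ → V ⊕ Fin k → ℕ,
      IsRecolSeq (ListToK G L k) k seq ℓ' (extColoring k α) (extColoring k β)) :=
  stmt_9_general G k hk L hL α β ℓ
end

section
/- Let G be a graph with k-colorings α and β, let B ⊆ V(G), and suppose α(v) = β(v) for every v ∉ B. Let L assign to each v ∈ B a list L(v) ⊆ {1,…,k} with α(v) ∈ L(v) and β(v) ∈ L(v). Suppose that for every vertex u ∉ B and every neighbor v ∈ B of u, α(u) ∉ L(v). Then for every L-recoloring sequence γ_0, …, γ_ℓ of the induced subgraph G[B] from α restricted to B to β restricted to B, the sequence of maps obtained by extending each γ_i with the values of α on V(G) \ B is a k-recoloring sequence for G from α to β of length ℓ. -/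
section ExtendOutside

variable {V C : Type*} (B : Set V) [DecidablePred (· ∈ B)]

def extendOutside (α : V → C) (γ : B → C) : V → C :=
  fun v => if h : v ∈ B then γ ⟨v, h⟩ else α v

variable {B}

@[simp]
theorem extendOutside_of_mem (α : V → C) (γ : B → C) {v : V} (hv : v ∈ B) :
    extendOutside B α γ v = γ ⟨v, hv⟩ :=
  dif_pos hv

@[simp]
theorem extendOutside_of_notMem (α : V → C) (γ : B → C) {v : V} (hv : v ∉ B) :
    extendOutside B α γ v = α v :=
  dif_neg hv

theorem extendOutside_restrict {α β : V → C} (hout : ∀ v ∉ B, α v = β v) :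
    extendOutside B α (fun v => β v) = β := by
  funext v
  by_cases hv : v ∈ B
  · simp [hv]
  · simp [hv, hout v hv]

theorem mem_of_extendOutside_ne {α : V → C} {γ γ' : B → C} {v : V}
    (h : extendOutside B α γ v ≠ extendOutside B α γ' v) :
    ∃ hv : v ∈ B, γ ⟨v, hv⟩ ≠ γ' ⟨v, hv⟩ := by
  by_cases hv : v ∈ B
  · exact ⟨hv, by simpa [hv] using h⟩
  · simp [hv] at h

end ExtendOutside

theorem IsLColoring.isKColoring_extendOutside {V : Type*} {G : SimpleGraph V} {k : ℕ}
    {α : V → ℕ} (hα : IsKColoring G k α) {B : Set V} [DecidablePred (· ∈ B)]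
    {L : V → Finset ℕ} (hLk : ∀ v ∈ B, L v ⊆ Finset.Icc 1 k)
    (hsep : ∀ u ∉ B, ∀ v ∈ B, G.Adj u v → α u ∉ L v) {γ : B → ℕ}
    (hγ : IsLColoring (G.induce B) (fun v => L v.val) γ) :
    IsKColoring G k (extendOutside B α γ) := by
  obtain ⟨hmem, hadj⟩ := hγ
  refine ⟨fun v => ?_, fun u v huv => ?_⟩
  · by_cases hv : v ∈ B
    · simpa [hv] using hLk v hv (hmem ⟨v, hv⟩)
    · simpa [hv] using hα.1 v
  by_cases hu : u ∈ B <;> by_cases hv : v ∈ B <;>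
    simp only [hu, hv, extendOutside_of_mem, extendOutside_of_notMem, not_false_eq_true]
  · exact hadj ⟨u, hu⟩ ⟨v, hv⟩ huv
  · exact fun heq => hsep v hv u hu huv.symm (heq ▸ hmem ⟨u, hu⟩)
  · exact fun heq => hsep u hu v hv huv (heq.symm ▸ hmem ⟨v, hv⟩)
  · exact hα.2 u v huv

theorem stmt_18_general {V : Type*} (G : SimpleGraph V) (k : ℕ) (α β : V → ℕ)
    (hα : IsKColoring G k α)
    (B : Set V) [DecidablePred (· ∈ B)]
    (hout : ∀ v ∉ B, α v = β v)
    (L : V → Finset ℕ)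
    (hLk : ∀ v ∈ B, L v ⊆ Finset.Icc 1 k)
    (hsep : ∀ u ∉ B, ∀ v ∈ B, G.Adj u v → α u ∉ L v)
    (ℓ : ℕ) (seq : ℕ → ↥B → ℕ)
    (hseq : IsLRecolSeq (G.induce B) (fun v => L v.val) seq ℓ
      (fun v => α v.val) (fun v => β v.val)) :
    IsRecolSeq G k (fun i v => if h : v ∈ B then seq i ⟨v, h⟩ else α v) ℓ α β := by
  obtain ⟨h0, hl, hcol, hstep⟩ := hseq
  show IsRecolSeq G k (fun i => extendOutside B α (seq i)) ℓ α β
  refine ⟨?_, ?_, fun i hi => (hcol i hi).isKColoring_extendOutside hα hLk hsep, ?_⟩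
  · exact (congrArg _ h0).trans (extendOutside_restrict fun _ _ => rfl)
  · exact (congrArg _ hl).trans (extendOutside_restrict hout)
  · intro i hi u w hu hw
    obtain ⟨hu, hu'⟩ := mem_of_extendOutside_ne hu
    obtain ⟨hw, hw'⟩ := mem_of_extendOutside_ne hw
    exact congrArg Subtype.val (hstep i hi ⟨u, hu⟩ ⟨w, hw⟩ hu' hw')

/-- Let `α`, `β` be `k`-colorings of `G` agreeing outside `B ⊆ V(G)`, and
let `L` assign to each `v ∈ B` a list `L(v) ⊆ {1,…,k}` containing `α(v)` and `β(v)`.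
Suppose that for every `u ∉ B` and every neighbor `v ∈ B` of `u` we have `α(u) ∉ L(v)`.
Then every `L`-recoloring sequence of `G[B]` from `α|_B` to `β|_B`, extended by the
values of `α` on `V(G) \ B`, is a `k`-recoloring sequence for `G` from `α` to `β` of the
same length. -/
theorem stmt_18 {V : Type*} (G : SimpleGraph V) (k : ℕ) (α β : V → ℕ)
    (hα : IsKColoring G k α) (hβ : IsKColoring G k β)
    (B : Set V) [DecidablePred (· ∈ B)]
    (hout : ∀ v ∉ B, α v = β v)
    (L : V → Finset ℕ)
    (hLk : ∀ v ∈ B, L v ⊆ Finset.Icc 1 k)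
    (hαL : ∀ v ∈ B, α v ∈ L v) (hβL : ∀ v ∈ B, β v ∈ L v)
    (hsep : ∀ u ∉ B, ∀ v ∈ B, G.Adj u v → α u ∉ L v)
    (ℓ : ℕ) (seq : ℕ → ↥B → ℕ)
    (hseq : IsLRecolSeq (G.induce B) (fun v => L v.val) seq ℓ
      (fun v => α v.val) (fun v => β v.val)) :
    IsRecolSeq G k (fun i v => if h : v ∈ B then seq i ⟨v, h⟩ else α v) ℓ α β :=
  stmt_18_general G k α β hα B hout L hLk hsep ℓ seq hseq
end
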